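/- arXiv:math/0605537 — 2 statements merged into one kernel-verified Lean document; each statement's English description precedes it below -/
import Mathlib

section
/- (Poset form of the Lemma on maximal cones.) Let f : (P, w) → Σ be a maximal branched cover of finite rooted posets. Then w(σ) = 1 for every maximal element σ of P with σ ≠ root of P; that is, a maximal branched cover is unramified along every maximal cone. -/
open scoped Classical

/-- `r` is the unique minimal element (the root) of the poset `P`. -/
def IsRoot {P : Type} [PartialOrder P] (r : P) : Prop :=
  (∀ x : P, x ≤ r → x = r) ∧ ∀ x : P, (∀ y : P, y ≤ x → y = x) → x = r

/-- A branched cover of finite posets: the weights are positive, `f` restricts to an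
order isomorphism from `P_x = {y ≤ x}` onto `Q_{f x} = {η ≤ f x}` for every `x`, and
for every `x` the weighted trace over `P^x = {y ≥ x}` is constant on `Q^{f x}`. -/
def IsBranchedCover {P Q : Type} [PartialOrder P] [PartialOrder Q] [Fintype P] [Fintype Q]
    (f : P → Q) (w : P → ℤ) : Prop :=
  (∀ x : P, 1 ≤ w x) ∧
  (∀ x y z : P, y ≤ x → z ≤ x → (f y ≤ f z ↔ y ≤ z)) ∧
  (∀ x : P, ∀ η : Q, η ≤ f x → ∃ y : P, y ≤ x ∧ f y = η) ∧
  (∀ x : P, ∀ η η' : Q, f x ≤ η → f x ≤ η' →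
    ∑ y ∈ Finset.univ.filter (fun y => x ≤ y ∧ f y = η), w y =
    ∑ y ∈ Finset.univ.filter (fun y => x ≤ y ∧ f y = η'), w y)

/-- A branched cover `f : (P, w) → Q` is maximal if every branched cover
`f' : (P', w') → Q` mapping onto it (via a monotone map `g` with `f' = f ∘ g` and
`Tr_g w' = w`) does so by an order isomorphism. -/
def IsMaximalBranchedCover {P Q : Type} [PartialOrder P] [PartialOrder Q]
    [Fintype P] [Fintype Q] (f : P → Q) (w : P → ℤ) : Prop :=
  IsBranchedCover f w ∧
  ∀ (P' : Type) (_ : PartialOrder P') (_ : Fintype P') (f' : P' → Q) (w' : P' → ℤ),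
    IsBranchedCover f' w' →
    ∀ g : P' → P, Monotone g → f' = f ∘ g →
      (∀ x : P, ∑ y ∈ Finset.univ.filter (fun y => g y = x), w' y = w x) →
      Function.Bijective g ∧ ∀ a b : P', g a ≤ g b ↔ a ≤ b

structure Split (P : Type) (σ : P) where
  base : P
  top : Bool
  prop : top = true → base = σ

instance {P : Type} [PartialOrder P] {σ : P} : PartialOrder (Split P σ) where
  le a b := a.base ≤ b.base ∧ (a.base = b.base → a.top = b.top)
  le_refl a := ⟨le_refl _, fun _ => rfl⟩
  le_trans a b c h1 h2 := by
    refine ⟨h1.1.trans h2.1, fun hac => ?_⟩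
    have hab : a.base = b.base := le_antisymm h1.1 (hac ▸ h2.1)
    have hbc : b.base = c.base := hab ▸ hac
    exact (h1.2 hab).trans (h2.2 hbc)
  le_antisymm a b h1 h2 := by
    obtain ⟨ab, ai, ap⟩ := a
    obtain ⟨bb, bi, bp⟩ := b
    have hx : ab = bb := le_antisymm h1.1 h2.1
    have hi : ai = bi := h1.2 hx
    subst hx; subst hi; rfl

theorem Split.le_def {P : Type} [PartialOrder P] {σ : P} (a b : Split P σ) :
    a ≤ b ↔ a.base ≤ b.base ∧ (a.base = b.base → a.top = b.top) := Iff.rfl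

def Split.mk0 {P : Type} (σ : P) (x : P) : Split P σ := ⟨x, false, by simp⟩

def Split.t {P : Type} (σ : P) : Split P σ := ⟨σ, true, fun _ => rfl⟩

@[simp] theorem Split.mk0_base {P : Type} (σ x : P) : (Split.mk0 σ x).base = x := rfl
@[simp] theorem Split.mk0_top {P : Type} (σ x : P) : (Split.mk0 σ x).top = false := rfl
@[simp] theorem Split.t_base {P : Type} (σ : P) : (Split.t σ).base = σ := rfl
@[simp] theorem Split.t_top {P : Type} (σ : P) : (Split.t σ).top = true := rfl

def Split.equiv (P : Type) (σ : P) : P ⊕ Unit ≃ Split P σ where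
  toFun s := Sum.elim (Split.mk0 σ) (fun _ => Split.t σ) s
  invFun a := if a.top = true then Sum.inr () else Sum.inl a.base
  left_inv s := by cases s <;> simp [Split.mk0, Split.t]
  right_inv a := by
    obtain ⟨b, i, p⟩ := a
    cases i with
    | false => simp [Split.mk0]
    | true => have := p rfl; subst this; simp [Split.t]

noncomputable instance {P : Type} [Fintype P] {σ : P} : Fintype (Split P σ) :=
  Fintype.ofEquiv _ (Split.equiv P σ)

theorem Split.sum_decomp {P : Type} [Fintype P] (σ : P) (F : Split P σ → ℤ) :
    ∑ a : Split P σ, F a = (∑ x : P, F (Split.mk0 σ x)) + F (Split.t σ) := by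
  rw [← Equiv.sum_comp (Split.equiv P σ), Fintype.sum_sum_type]
  simp [Split.equiv]

/-- A maximal branched cover of finite rooted posets is unramified along every
maximal element: the weight of any maximal element other than the root is `1`. -/
theorem maximalBranchedCover_unramified_along_maximal {P Q : Type}
    [PartialOrder P] [PartialOrder Q] [Fintype P] [Fintype Q]
    (f : P → Q) (w : P → ℤ) (hmax : IsMaximalBranchedCover f w)
    (rP : P) (hrP : IsRoot rP) (rQ : Q) (hrQ : IsRoot rQ)
    (σ : P) (hσmax : ∀ y : P, σ ≤ y → y = σ) (hσne : σ ≠ rP) :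
    w σ = 1 := by
  obtain ⟨⟨hw, hiso, hsurj, htr⟩, hM⟩ := hmax
  by_contra hne1
  have hw2 : 2 ≤ w σ := by have := hw σ; omega
  -- `f σ` is maximal in `Q`.
  have hfσmax : ∀ η : Q, f σ ≤ η → η = f σ := by
    intro η hη
    by_contra h
    have h1 := htr σ η (f σ) hη le_rfl
    have h2 : Finset.univ.filter (fun y => σ ≤ y ∧ f y = η) = ∅ := by
      ext y
      simp only [Finset.mem_filter, Finset.mem_univ, true_and, Finset.notMem_empty,
        iff_false, not_and]
      intro hy
      have := hσmax y hy
      subst this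
      exact fun hf => h hf.symm
    have h3 : Finset.univ.filter (fun y => σ ≤ y ∧ f y = f σ) = {σ} := by
      ext y
      simp only [Finset.mem_filter, Finset.mem_univ, true_and, Finset.mem_singleton]
      constructor
      · rintro ⟨hy, -⟩; exact hσmax y hy
      · rintro rfl; exact ⟨le_rfl, rfl⟩
    rw [h2, h3, Finset.sum_empty, Finset.sum_singleton] at h1
    have := hw σ; omega
  -- the data of the split cover
  set w' : Split P σ → ℤ := fun a =>
    if a.top = true then 1 else if a.base = σ then w σ - 1 else w a.base with hw'def
  set g : Split P σ → P := fun a => a.base with hgdef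
  have hw'mk0 : ∀ x : P, w' (Split.mk0 σ x) = if x = σ then w σ - 1 else w x := by
    intro x; simp [hw'def, Split.mk0]
  have hw't : w' (Split.t σ) = 1 := by simp [hw'def, Split.t]
  -- the split is a branched cover
  have hBC : IsBranchedCover (f ∘ g) w' := by
    refine ⟨?_, ?_, ?_, ?_⟩
    · intro a
      simp only [hw'def]
      split
      · omega
      · split
        · omega
        · exact hw a.base
    · intro x y z hyx hzx
      rw [Split.le_def] at hyx hzx ⊢
      simp only [Function.comp_apply, hgdef]
      rw [hiso x.base y.base z.base hyx.1 hzx.1]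
      constructor
      · intro hbz
        refine ⟨hbz, fun hbe => ?_⟩
        by_cases hσb : y.base = σ
        · have hz : z.base = σ := hbe.symm.trans hσb
          have hx : x.base = σ := hσmax _ (hσb.symm.trans_le hyx.1)
          rw [hyx.2 (hσb.trans hx.symm), hzx.2 (hz.trans hx.symm)]
        · have h1 : y.top = false := by
            cases hy : y.top with
            | false => rfl
            | true => exact absurd (y.prop hy) hσb
          have h2 : z.top = false := by
            cases hz : z.top with
            | false => rfl
            | true => exact absurd (hbe.trans (z.prop hz)) hσb
          rw [h1, h2]
      · exact fun h => h.1
    · intro x η hη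
      obtain ⟨b, hb, hfb⟩ := hsurj x.base η hη
      by_cases hbe : b = x.base
      · exact ⟨x, le_rfl, by simpa [hgdef, hbe] using hfb⟩
      · refine ⟨Split.mk0 σ b, ?_, hfb⟩
        rw [Split.le_def]
        exact ⟨hb, fun h => absurd h hbe⟩
    · intro x η η' hη hη'
      simp only [Function.comp_apply, hgdef] at hη hη'
      by_cases hxσ : x.base = σ
      · rw [hxσ] at hη hη'
        rw [hfσmax η hη, hfσmax η' hη']
      · have hxtop : x.top = false := by
          cases hx : x.top with
          | false => rfl
          | true => exact absurd (x.prop hx) hxσ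
        have key : ∀ η₀ : Q,
            ∑ a ∈ Finset.univ.filter (fun a => x ≤ a ∧ (f ∘ g) a = η₀), w' a =
            ∑ y ∈ Finset.univ.filter (fun y => x.base ≤ y ∧ f y = η₀), w y := by
          intro η₀
          rw [Finset.sum_filter, Finset.sum_filter,
            Split.sum_decomp σ (fun a => if x ≤ a ∧ (f ∘ g) a = η₀ then w' a else 0)]
          have hle0 : ∀ y : P, x ≤ Split.mk0 σ y ↔ x.base ≤ y := by
            intro y
            rw [Split.le_def]
            simp [Split.mk0, hxtop]
          have hlet : x ≤ Split.t σ ↔ x.base ≤ σ := by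
            rw [Split.le_def]
            simp [Split.t, hxσ]
          have hterm : ∀ y : P,
              (if x ≤ Split.mk0 σ y ∧ (f ∘ g) (Split.mk0 σ y) = η₀ then w' (Split.mk0 σ y) else 0)
              = (if x.base ≤ y ∧ f y = η₀ then w y else 0)
                - (if y = σ then (if x.base ≤ σ ∧ f σ = η₀ then (1 : ℤ) else 0) else 0) := by
            intro y
            rw [hw'mk0]
            simp only [Function.comp_apply, hgdef, Split.mk0_base, hle0 y]
            by_cases h1 : y = σ
            · subst h1
              by_cases h2 : x.base ≤ y ∧ f y = η₀ <;> simp [h2]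
            · simp [h1]
          rw [Finset.sum_congr rfl (fun y _ => hterm y), Finset.sum_sub_distrib,
            Finset.sum_ite_eq' Finset.univ σ
              (fun _ => if x.base ≤ σ ∧ f σ = η₀ then (1 : ℤ) else 0)]
          simp only [Finset.mem_univ, if_true, Function.comp_apply, hgdef, Split.t_base,
            hlet, hw't]
          ring
        rw [key η, key η']
        exact htr x.base η η' hη hη'
  -- the trace condition
  have htrace : ∀ x : P,
      ∑ a ∈ Finset.univ.filter (fun a => g a = x), w' a = w x := by
    intro x
    rw [Finset.sum_filter, Split.sum_decomp σ (fun a => if g a = x then w' a else 0)]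
    have h1 : ∀ y : P, g (Split.mk0 σ y) = y := fun y => rfl
    have h2 : g (Split.t σ) = σ := rfl
    simp only [h1, h2, hw't]
    rw [Finset.sum_ite_eq' Finset.univ x (fun y => w' (Split.mk0 σ y))]
    simp only [Finset.mem_univ, if_true, hw'mk0]
    by_cases hx : x = σ
    · subst hx; simp
    · simp [hx, Ne.symm hx]
  -- monotonicity of g
  have hgmono : Monotone g := fun a b hab => hab.1
  obtain ⟨hbij, -⟩ := hM (Split P σ) inferInstance inferInstance (f ∘ g) w' hBC g hgmono rfl htrace
  have heq : Split.mk0 σ σ = Split.t σ := hbij.1 (show g (Split.mk0 σ σ) = g (Split.t σ) from rfl)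
  simpa [Split.mk0, Split.t] using congrArg Split.top heq
end

section
/- (Poset form of the Proposition on codimension-one cones.) Let f : (P, w) → Σ be a maximal branched cover of finite rooted posets, and let τ ∈ P with τ ≠ root of P. Suppose that Σ^{f(τ)} = {f(τ), γ, γ'}, where γ and γ' are two distinct maximal elements of Σ, each different from f(τ). Then w(τ) = 1. (For a complete fan Σ, the cones containing a codimension-one cone f(τ) are exactly f(τ) itself and the two maximal cones containing it, so this is the combinatorial content of the statement that a maximal branched cover of a complete fan is unramified along every codimension-one cone.) -/
open scoped Classical

section Aux
variable {P : Type} [PartialOrder P]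

/-- Auxiliary order on `P ⊕ Fin 3` used to split a ramified element. -/
def auxLe (τ : P) (ρ : Fin 3 → P) : P ⊕ Fin 3 → P ⊕ Fin 3 → Prop
  | .inl z, .inl z' => z ≤ z'
  | .inl z, .inr j => z ≤ ρ j ∧ ¬ τ ≤ z
  | .inr _, .inl _ => False
  | .inr i, .inr j => ρ i ≤ ρ j

@[simp] lemma auxLe_inl_inl {τ : P} {ρ : Fin 3 → P} {z z' : P} :
    auxLe τ ρ (.inl z) (.inl z') ↔ z ≤ z' := Iff.rfl

@[simp] lemma auxLe_inl_inr {τ : P} {ρ : Fin 3 → P} {z : P} {j : Fin 3} :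
    auxLe τ ρ (.inl z) (.inr j) ↔ z ≤ ρ j ∧ ¬ τ ≤ z := Iff.rfl

@[simp] lemma auxLe_inr_inl {τ : P} {ρ : Fin 3 → P} {z : P} {i : Fin 3} :
    auxLe τ ρ (.inr i) (.inl z) ↔ False := Iff.rfl

@[simp] lemma auxLe_inr_inr {τ : P} {ρ : Fin 3 → P} {i j : Fin 3} :
    auxLe τ ρ (.inr i) (.inr j) ↔ ρ i ≤ ρ j := Iff.rfl

lemma auxLe_refl (τ : P) (ρ : Fin 3 → P) (x : P ⊕ Fin 3) : auxLe τ ρ x x := by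
  cases x <;> simp

lemma auxLe_trans {τ : P} {ρ : Fin 3 → P} {x y z : P ⊕ Fin 3}
    (h1 : auxLe τ ρ x y) (h2 : auxLe τ ρ y z) : auxLe τ ρ x z := by
  rcases x with u | i <;> rcases y with v | j <;> rcases z with t | k <;>
    simp_all
  · exact le_trans h1 h2
  · exact ⟨le_trans h1 h2.1, fun h => h2.2 (le_trans h h1)⟩
  · exact le_trans h1.1 h2
  · exact le_trans h1 h2

lemma auxLe_antisymm {τ : P} {ρ : Fin 3 → P}
    (hρ : ∀ i j, ρ i ≤ ρ j → ρ j ≤ ρ i → i = j) {x y : P ⊕ Fin 3}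
    (h1 : auxLe τ ρ x y) (h2 : auxLe τ ρ y x) : x = y := by
  rcases x with u | i <;> rcases y with v | j <;> simp_all
  · exact le_antisymm h1 h2
  · exact hρ i j h1 h2

/-- The partial order on the subtype used in the splitting construction. -/
def auxPO (τ : P) (ρ : Fin 3 → P) (hρ : ∀ i j, ρ i ≤ ρ j → ρ j ≤ ρ i → i = j)
    (Pr : P ⊕ Fin 3 → Prop) : PartialOrder {x : P ⊕ Fin 3 // Pr x} where
  le x y := auxLe τ ρ x.1 y.1
  lt x y := auxLe τ ρ x.1 y.1 ∧ ¬ auxLe τ ρ y.1 x.1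
  lt_iff_le_not_ge _ _ := Iff.rfl
  le_refl x := auxLe_refl τ ρ x.1
  le_trans _ _ _ h1 h2 := auxLe_trans h1 h2
  le_antisymm _ _ h1 h2 := Subtype.ext (auxLe_antisymm hρ h1 h2)

end Aux

/-- A maximal branched cover of finite rooted posets is unramified along every
"codimension-one" element: if the elements of `Q` lying above `f τ` are exactly
`f τ` itself and two distinct maximal elements `γ ≠ γ'` of `Q`, then `w τ = 1`. -/
theorem maximalBranchedCover_unramified_in_codim_one {P Q : Type}
    [PartialOrder P] [PartialOrder Q] [Fintype P] [Fintype Q]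
    (f : P → Q) (w : P → ℤ) (hmax : IsMaximalBranchedCover f w)
    (rP : P) (hrP : IsRoot rP) (rQ : Q) (hrQ : IsRoot rQ)
    (τ : P) (hτne : τ ≠ rP) (γ γ' : Q)
    (hγγ' : γ ≠ γ') (hγτ : γ ≠ f τ) (hγ'τ : γ' ≠ f τ)
    (hγmax : ∀ η : Q, γ ≤ η → η = γ) (hγ'max : ∀ η : Q, γ' ≤ η → η = γ')
    (hup : {η : Q | f τ ≤ η} = {f τ, γ, γ'}) :
    w τ = 1 := by
  classical
  obtain ⟨⟨hw1, h2, h3, h4⟩, hmax2⟩ := hmax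
  have fmono : ∀ {y z : P}, y ≤ z → f y ≤ f z := by
    intro y z h
    exact (h2 z y z h le_rfl).mpr h
  have finj : ∀ {y z : P}, y ≤ z → f y = f z → y = z := by
    intro y z h he
    exact le_antisymm h ((h2 z z y le_rfl h).mp he.ge)
  have hfτle : ∀ {y : P}, τ ≤ y → f y = f τ → y = τ := by
    intro y h he
    exact le_antisymm ((h2 y y τ le_rfl h).mp he.le) h
  have hupt : ∀ {y : P}, τ ≤ y → f y = f τ ∨ f y = γ ∨ f y = γ' := by
    intro y h
    have hm : f y ∈ {η : Q | f τ ≤ η} := fmono h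
    rw [hup] at hm
    simpa using hm
  have hηmem : ∀ {η0 : Q}, f τ ≤ η0 → η0 = f τ ∨ η0 = γ ∨ η0 = γ' := by
    intro η0 h
    have hm : η0 ∈ {η : Q | f τ ≤ η} := h
    rw [hup] at hm
    simpa using hm
  have hfτγ : f τ ≤ γ := by
    have hm : γ ∈ ({f τ, γ, γ'} : Set Q) := by simp
    rw [← hup] at hm; exact hm
  have hfτγ' : f τ ≤ γ' := by
    have hm : γ' ∈ ({f τ, γ, γ'} : Set Q) := by simp
    rw [← hup] at hm; exact hm
  -- traces at τ
  have hTτ : ∑ y ∈ Finset.univ.filter (fun y => τ ≤ y ∧ f y = f τ), w y = w τ := by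
    have he : Finset.univ.filter (fun y => τ ≤ y ∧ f y = f τ) = {τ} := by
      ext y
      simp only [Finset.mem_filter, Finset.mem_univ, true_and, Finset.mem_singleton]
      constructor
      · rintro ⟨hy1, hy2⟩; exact hfτle hy1 hy2
      · rintro rfl; exact ⟨le_rfl, rfl⟩
    rw [he, Finset.sum_singleton]
  have hTγ : ∑ y ∈ Finset.univ.filter (fun y => τ ≤ y ∧ f y = γ), w y = w τ :=
    (h4 τ γ (f τ) hfτγ le_rfl).trans hTτ
  have hTγ' : ∑ y ∈ Finset.univ.filter (fun y => τ ≤ y ∧ f y = γ'), w y = w τ :=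
    (h4 τ γ' (f τ) hfτγ' le_rfl).trans hTτ
  by_contra hne
  have hwτ2 : 2 ≤ w τ := by have := hw1 τ; omega
  -- pick a and b above τ mapping to γ and γ'
  have hAne : (Finset.univ.filter (fun y => τ ≤ y ∧ f y = γ)).Nonempty := by
    by_contra h
    rw [Finset.not_nonempty_iff_eq_empty] at h
    rw [h, Finset.sum_empty] at hTγ
    omega
  have hBne : (Finset.univ.filter (fun y => τ ≤ y ∧ f y = γ')).Nonempty := by
    by_contra h
    rw [Finset.not_nonempty_iff_eq_empty] at h
    rw [h, Finset.sum_empty] at hTγ'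
    omega
  obtain ⟨a, ha⟩ := hAne
  obtain ⟨b, hb⟩ := hBne
  rw [Finset.mem_filter] at ha hb
  obtain ⟨-, hτa, hfa⟩ := ha
  obtain ⟨-, hτb, hfb⟩ := hb
  -- basic incomparability facts
  have haτ : ¬ a ≤ τ := by
    intro h
    have hle : γ ≤ f τ := by rw [← hfa]; exact fmono h
    exact hγτ (hγmax (f τ) hle).symm
  have hbτ : ¬ b ≤ τ := by
    intro h
    have hle : γ' ≤ f τ := by rw [← hfb]; exact fmono h
    exact hγ'τ (hγ'max (f τ) hle).symm
  have hab : ¬ a ≤ b := by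
    intro h
    have hle : γ ≤ γ' := by rw [← hfa, ← hfb]; exact fmono h
    exact hγγ' (hγmax γ' hle).symm
  have hba : ¬ b ≤ a := by
    intro h
    have hle : γ' ≤ γ := by rw [← hfa, ← hfb]; exact fmono h
    exact hγγ' (hγ'max γ hle)
  have hτa' : τ ≠ a := fun h => haτ (le_of_eq h.symm)
  have hτb' : τ ≠ b := fun h => hbτ (le_of_eq h.symm)
  have hab' : a ≠ b := fun h => hab (le_of_eq h)
  have haτ' : a ≠ τ := Ne.symm hτa'
  have hbτ' : b ≠ τ := Ne.symm hτb'
  have hba' : b ≠ a := Ne.symm hab'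
  have hfτγne : f τ ≠ γ := fun h => hγτ h.symm
  have hfτγ'ne : f τ ≠ γ' := fun h => hγ'τ h.symm
  have hfbγ : f b ≠ γ := by rw [hfb]; exact Ne.symm hγγ'
  have hfaγ' : f a ≠ γ' := by rw [hfa]; exact hγγ'
  -- maximality of γ-elements and γ'-elements
  have hγel : ∀ {y z : P}, f y = γ → y ≤ z → z = y := by
    intro y z hy h
    have hle : γ ≤ f z := by rw [← hy]; exact fmono h
    exact (finj h (hy.trans (hγmax (f z) hle).symm)).symm
  have hγ'el : ∀ {y z : P}, f y = γ' → y ≤ z → z = y := by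
    intro y z hy h
    have hle : γ' ≤ f z := by rw [← hy]; exact fmono h
    exact (finj h (hy.trans (hγ'max (f z) hle).symm)).symm
  -- the construction
  let ρ : Fin 3 → P := ![τ, a, b]
  have hρ0 : ρ 0 = τ := rfl
  have hρ1 : ρ 1 = a := rfl
  have hρ2 : ρ 2 = b := rfl
  have hτρ : ∀ i, τ ≤ ρ i := by
    intro i
    fin_cases i
    · exact le_rfl
    · exact hτa
    · exact hτb
  have hρinj : ∀ i j : Fin 3, ρ i ≤ ρ j → ρ j ≤ ρ i → i = j := by
    intro i j hij hji
    fin_cases i <;> fin_cases j <;>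
      first
        | rfl
        | exact absurd hij haτ
        | exact absurd hij hbτ
        | exact absurd hij hab
        | exact absurd hij hba
        | exact absurd hji haτ
        | exact absurd hji hbτ
        | exact absurd hji hab
        | exact absurd hji hba
  let Pr : P ⊕ Fin 3 → Prop := Sum.elim (fun z => (z = a ∨ z = b) → 2 ≤ w z) (fun _ => True)
  let W0 : P ⊕ Fin 3 → ℤ :=
    Sum.elim (fun z => if z = τ ∨ z = a ∨ z = b then w z - 1 else w z) (fun _ => 1)
  let G0 : P ⊕ Fin 3 → P := Sum.elim id ρ
  have hPrl : ∀ z : P, Pr (.inl z) ↔ ((z = a ∨ z = b) → 2 ≤ w z) := fun _ => Iff.rfl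
  have hPrr : ∀ j : Fin 3, Pr (.inr j) := fun _ => trivial
  have hW0l : ∀ z : P, W0 (.inl z) = if z = τ ∨ z = a ∨ z = b then w z - 1 else w z :=
    fun _ => rfl
  have hW0r : ∀ j : Fin 3, W0 (.inr j) = 1 := fun _ => rfl
  have hG0l : ∀ z : P, G0 (.inl z) = z := fun _ => rfl
  have hG0r : ∀ j : Fin 3, G0 (.inr j) = ρ j := fun _ => rfl
  have hPrτ : Pr (.inl τ) := fun h => (h.elim (fun e => (hτa' e).elim) (fun e => (hτb' e).elim))
  have hPra : Pr (.inl a) ↔ 2 ≤ w a := by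
    rw [hPrl]; simp
  have hPrb : Pr (.inl b) ↔ 2 ≤ w b := by
    rw [hPrl]; simp [hba']
  have hPrgen : ∀ z : P, z ≠ a → z ≠ b → Pr (.inl z) := by
    intro z h1 h2
    rw [hPrl]
    rintro (rfl | rfl)
    · exact absurd rfl h1
    · exact absurd rfl h2
  let P' : Type := {x : P ⊕ Fin 3 // Pr x}
  letI PO : PartialOrder P' := auxPO τ ρ hρinj Pr
  letI FT : Fintype P' := Subtype.fintype Pr
  -- the key sum-splitting identity
  have key : ∀ (F : P ⊕ Fin 3 → Prop) (V : P ⊕ Fin 3 → ℤ),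
      (∑ y' ∈ Finset.univ.filter (fun y' : P' => F y'.1), V y'.1)
        = (∑ y ∈ Finset.univ.filter (fun y : P => Pr (.inl y) ∧ F (.inl y)), V (.inl y))
          + ∑ j ∈ Finset.univ.filter (fun j : Fin 3 => F (.inr j)), V (.inr j) := by
    intro F V
    have h1 : ∀ x : P ⊕ Fin 3, x ∈ Finset.univ.filter Pr ↔ Pr x := by simp
    calc
      (∑ y' ∈ Finset.univ.filter (fun y' : P' => F y'.1), V y'.1)
          = ∑ y' : P', if F y'.1 then V y'.1 else 0 := Finset.sum_filter _ _
      _ = ∑ u ∈ Finset.univ.filter Pr, (if F u then V u else 0) :=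
          (Finset.sum_subtype (F := FT) (Finset.univ.filter Pr) h1 (fun u => if F u then V u else 0)).symm
      _ = ∑ u : P ⊕ Fin 3, if Pr u then (if F u then V u else 0) else 0 :=
          Finset.sum_filter _ _
      _ = (∑ y : P, if Pr (.inl y) then (if F (.inl y) then V (.inl y) else 0) else 0)
          + ∑ j : Fin 3, if Pr (.inr j) then (if F (.inr j) then V (.inr j) else 0) else 0 :=
          Fintype.sum_sum_type _
      _ = (∑ y ∈ Finset.univ.filter (fun y : P => Pr (.inl y) ∧ F (.inl y)), V (.inl y))
          + ∑ j ∈ Finset.univ.filter (fun j : Fin 3 => F (.inr j)), V (.inr j) := by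
          rw [Finset.sum_filter, Finset.sum_filter]
          congr 1
          · refine Finset.sum_congr rfl ?_
            intro y _
            by_cases hp : Pr (.inl y) <;> by_cases hf : F (.inl y) <;> simp [hp, hf]
          · refine Finset.sum_congr rfl ?_
            intro j _
            rw [if_pos (hPrr j)]
  have keyAnd : ∀ (F1 F2 : P ⊕ Fin 3 → Prop) (V : P ⊕ Fin 3 → ℤ),
      (∑ y' ∈ Finset.univ.filter (fun y' : P' => F1 y'.1 ∧ F2 y'.1), V y'.1)
        = (∑ y ∈ Finset.univ.filter
            (fun y : P => Pr (.inl y) ∧ (F1 (.inl y) ∧ F2 (.inl y))), V (.inl y))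
          + ∑ j ∈ Finset.univ.filter (fun j : Fin 3 => F1 (.inr j) ∧ F2 (.inr j)), V (.inr j) := by
    intro F1 F2 V
    convert key (fun u => F1 u ∧ F2 u) V using 4
  -- trace over an element not above τ is unchanged
  have L1 : ∀ z : P, ¬ τ ≤ z → ∀ η0 : Q,
      (∑ y' ∈ Finset.univ.filter
          (fun y' : P' => auxLe τ ρ (.inl z) y'.1 ∧ f (G0 y'.1) = η0), W0 y'.1)
      = ∑ y ∈ Finset.univ.filter (fun y : P => z ≤ y ∧ f y = η0), w y := by
    intro z hτz η0
    have e := keyAnd (fun u => auxLe τ ρ (.inl z) u) (fun u => f (G0 u) = η0) W0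
    refine e.trans ?_
    rw [Finset.sum_filter, Finset.sum_filter, Finset.sum_filter, Fin.sum_univ_three]
    simp only [auxLe_inl_inl, auxLe_inl_inr, hG0l, hG0r, hW0l, hW0r, hρ0, hρ1, hρ2,
      hτz, not_false_eq_true, and_true]
    rw [show (if z ≤ τ ∧ f τ = η0 then (1:ℤ) else 0)
          = ∑ y : P, if y = τ then (if z ≤ y ∧ f y = η0 then (1:ℤ) else 0) else 0 from
        (Fintype.sum_ite_eq' τ (fun y => if z ≤ y ∧ f y = η0 then (1:ℤ) else 0)).symm,
      show (if z ≤ a ∧ f a = η0 then (1:ℤ) else 0)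
          = ∑ y : P, if y = a then (if z ≤ y ∧ f y = η0 then (1:ℤ) else 0) else 0 from
        (Fintype.sum_ite_eq' a (fun y => if z ≤ y ∧ f y = η0 then (1:ℤ) else 0)).symm,
      show (if z ≤ b ∧ f b = η0 then (1:ℤ) else 0)
          = ∑ y : P, if y = b then (if z ≤ y ∧ f y = η0 then (1:ℤ) else 0) else 0 from
        (Fintype.sum_ite_eq' b (fun y => if z ≤ y ∧ f y = η0 then (1:ℤ) else 0)).symm,
      ← Finset.sum_add_distrib, ← Finset.sum_add_distrib, ← Finset.sum_add_distrib]
    refine Finset.sum_congr rfl ?_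
    intro y _hy
    by_cases hC : z ≤ y ∧ f y = η0
    · by_cases hyτ : y = τ
      · subst hyτ
        rw [if_pos (show Pr (Sum.inl y) ∧ (z ≤ y ∧ f y = η0) from ⟨hPrτ, hC⟩),
          if_pos (Or.inl (rfl : y = y)), if_pos (rfl : y = y), if_pos hC,
          if_neg hτa', if_neg hτb', if_pos hC]
        ring
      · by_cases hya : y = a
        · subst hya
          rw [if_neg haτ', if_pos (rfl : y = y), if_pos hC, if_neg hab',
            if_pos (Or.inr (Or.inl (rfl : y = y))), if_pos hC]
          by_cases h2 : Pr (Sum.inl y)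
          · rw [if_pos (⟨h2, hC⟩ : Pr (Sum.inl y) ∧ (z ≤ y ∧ f y = η0))]; ring
          · rw [if_neg (fun hcon => h2 hcon.1)]
            have h3 : ¬ 2 ≤ w y := fun hh => h2 (hPra.mpr hh)
            have := hw1 y
            omega
        · by_cases hyb : y = b
          · subst hyb
            rw [if_neg hbτ', if_neg hba', if_pos (rfl : y = y), if_pos hC,
              if_pos (Or.inr (Or.inr (rfl : y = y))), if_pos hC]
            by_cases h2 : Pr (Sum.inl y)
            · rw [if_pos (⟨h2, hC⟩ : Pr (Sum.inl y) ∧ (z ≤ y ∧ f y = η0))]; ring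
            · rw [if_neg (fun hcon => h2 hcon.1)]
              have h3 : ¬ 2 ≤ w y := fun hh => h2 (hPrb.mpr hh)
              have := hw1 y
              omega
          · rw [if_neg hyτ, if_neg hya, if_neg hyb,
              if_pos (⟨hPrgen y hya hyb, hC⟩ : Pr (Sum.inl y) ∧ (z ≤ y ∧ f y = η0)),
              if_neg (show ¬(y = τ ∨ y = a ∨ y = b) by
                rintro (h | h | h)
                exacts [hyτ h, hya h, hyb h]),
              if_pos hC]
            ring
    · simp [hC]
  -- trace at the clone of τ below: the split element
  have L2 : ∀ η0 : Q, f τ ≤ η0 →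
      (∑ y' ∈ Finset.univ.filter
          (fun y' : P' => auxLe τ ρ (.inl τ) y'.1 ∧ f (G0 y'.1) = η0), W0 y'.1) = w τ - 1 := by
    intro η0 hη0
    have e := keyAnd (fun u => auxLe τ ρ (.inl τ) u) (fun u => f (G0 u) = η0) W0
    refine e.trans ?_
    have hfin : Finset.univ.filter
        (fun j : Fin 3 => auxLe τ ρ (.inl τ) (.inr j) ∧ f (G0 (.inr j)) = η0) = ∅ := by
      refine Finset.filter_false_of_mem ?_
      rintro j - ⟨⟨-, hcon⟩, -⟩
      exact hcon le_rfl
    rw [hfin, Finset.sum_empty, add_zero]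
    rcases hηmem hη0 with rfl | heq | heq
    · -- η0 = f τ : only τ itself contributes
      have hflt : Finset.univ.filter (fun y : P =>
          Pr (.inl y) ∧ (auxLe τ ρ (.inl τ) (.inl y) ∧ f (G0 (.inl y)) = f τ)) = {τ} := by
        ext y
        simp only [Finset.mem_filter, Finset.mem_univ, true_and, Finset.mem_singleton]
        constructor
        · rintro ⟨-, h1, h2⟩
          exact hfτle h1 h2
        · rintro rfl
          exact ⟨hPrτ, le_rfl, rfl⟩
      rw [hflt, Finset.sum_singleton, hW0l, if_pos (Or.inl rfl)]
    · -- η0 = γ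
      rw [heq]
      have hstep : (∑ y ∈ Finset.univ.filter (fun y : P =>
          Pr (.inl y) ∧ (auxLe τ ρ (.inl τ) (.inl y) ∧ f (G0 (.inl y)) = γ)), W0 (.inl y)) + 1
          = w τ := by
        refine Eq.trans ?_ hTγ
        rw [Finset.sum_filter, Finset.sum_filter,
          show (1:ℤ) = ∑ y : P, if y = a then (1:ℤ) else 0 from
            (Fintype.sum_ite_eq' a (fun _ => (1:ℤ))).symm,
          ← Finset.sum_add_distrib]
        refine Finset.sum_congr rfl ?_
        intro y _hy
        by_cases hC : τ ≤ y ∧ f y = γ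
        · by_cases hya : y = a
          · subst hya
            rw [if_pos (rfl : y = y), if_pos hC]
            by_cases hp : Pr (Sum.inl y)
            · rw [if_pos (⟨hp, hC.1, hC.2⟩ : Pr (Sum.inl y) ∧ _), hW0l,
                if_pos (Or.inr (Or.inl rfl))]
              ring
            · rw [if_neg (fun hcon => hp hcon.1)]
              have h3' : ¬ 2 ≤ w y := fun hh => hp (hPra.mpr hh)
              have := hw1 y
              omega
          · have hyτ : y ≠ τ := fun h => hfτγne (h ▸ hC.2)
            have hyb : y ≠ b := fun h => hfbγ (h ▸ hC.2)
            rw [if_neg hya,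
              if_pos (⟨hPrgen y hya hyb, hC.1, hC.2⟩ : Pr (Sum.inl y) ∧ _), hW0l,
              if_neg (show ¬(y = τ ∨ y = a ∨ y = b) by
                rintro (h | h | h)
                exacts [hyτ h, hya h, hyb h]),
              if_pos hC]
            ring
        · have hya : y ≠ a := fun h => hC (by rw [h]; exact ⟨hτa, hfa⟩)
          rw [if_neg hya, if_neg (fun hcon : Pr (Sum.inl y) ∧ _ => hC ⟨hcon.2.1, hcon.2.2⟩),
            if_neg hC]
          ring
      omega
    · -- η0 = γ'
      rw [heq]
      have hstep : (∑ y ∈ Finset.univ.filter (fun y : P =>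
          Pr (.inl y) ∧ (auxLe τ ρ (.inl τ) (.inl y) ∧ f (G0 (.inl y)) = γ')), W0 (.inl y)) + 1
          = w τ := by
        refine Eq.trans ?_ hTγ'
        rw [Finset.sum_filter, Finset.sum_filter,
          show (1:ℤ) = ∑ y : P, if y = b then (1:ℤ) else 0 from
            (Fintype.sum_ite_eq' b (fun _ => (1:ℤ))).symm,
          ← Finset.sum_add_distrib]
        refine Finset.sum_congr rfl ?_
        intro y _hy
        by_cases hC : τ ≤ y ∧ f y = γ'
        · by_cases hyb : y = b
          · subst hyb
            rw [if_pos (rfl : y = y), if_pos hC]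
            by_cases hp : Pr (Sum.inl y)
            · rw [if_pos (⟨hp, hC.1, hC.2⟩ : Pr (Sum.inl y) ∧ _), hW0l,
                if_pos (Or.inr (Or.inr rfl))]
              ring
            · rw [if_neg (fun hcon => hp hcon.1)]
              have h3' : ¬ 2 ≤ w y := fun hh => hp (hPrb.mpr hh)
              have := hw1 y
              omega
          · have hyτ : y ≠ τ := fun h => hfτγ'ne (h ▸ hC.2)
            have hya : y ≠ a := fun h => hfaγ' (h ▸ hC.2)
            rw [if_neg hyb,
              if_pos (⟨hPrgen y hya hyb, hC.1, hC.2⟩ : Pr (Sum.inl y) ∧ _), hW0l,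
              if_neg (show ¬(y = τ ∨ y = a ∨ y = b) by
                rintro (h | h | h)
                exacts [hyτ h, hya h, hyb h]),
              if_pos hC]
            ring
        · have hyb : y ≠ b := fun h => hC (by rw [h]; exact ⟨hτb, hfb⟩)
          rw [if_neg hyb, if_neg (fun hcon : Pr (Sum.inl y) ∧ _ => hC ⟨hcon.2.1, hcon.2.2⟩),
            if_neg hC]
          ring
      omega
  -- trace at the new minimal clone
  have L3 : ∀ η0 : Q, f τ ≤ η0 →
      (∑ y' ∈ Finset.univ.filter
          (fun y' : P' => auxLe τ ρ (.inr 0) y'.1 ∧ f (G0 y'.1) = η0), W0 y'.1) = 1 := by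
    intro η0 hη0
    have e := keyAnd (fun u => auxLe τ ρ (.inr 0) u) (fun u => f (G0 u) = η0) W0
    refine e.trans ?_
    have hinl : Finset.univ.filter (fun y : P =>
        Pr (.inl y) ∧ (auxLe τ ρ (.inr 0) (.inl y) ∧ f (G0 (.inl y)) = η0)) = ∅ := by
      refine Finset.filter_false_of_mem ?_
      rintro y - ⟨-, hcon, -⟩
      exact hcon
    rw [hinl, Finset.sum_empty, zero_add, Finset.sum_filter, Fin.sum_univ_three]
    simp only [auxLe_inr_inr, hG0r, hW0r, hρ0, hρ1, hρ2]
    rw [hfa, hfb]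
    rcases hηmem hη0 with rfl | heq | heq
    · rw [if_pos (⟨le_rfl, rfl⟩ : τ ≤ τ ∧ f τ = f τ),
        if_neg (fun h : τ ≤ a ∧ γ = f τ => hγτ h.2),
        if_neg (fun h : τ ≤ b ∧ γ' = f τ => hγ'τ h.2)]
      norm_num
    · rw [heq,
        if_neg (fun h : τ ≤ τ ∧ f τ = γ => hfτγne h.2),
        if_pos (⟨hτa, rfl⟩ : τ ≤ a ∧ γ = γ),
        if_neg (fun h : τ ≤ b ∧ γ' = γ => hγγ' h.2.symm)]
      norm_num
    · rw [heq,
        if_neg (fun h : τ ≤ τ ∧ f τ = γ' => hfτγ'ne h.2),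
        if_neg (fun h : τ ≤ a ∧ γ = γ' => hγγ' h.2),
        if_pos (⟨hτb, rfl⟩ : τ ≤ b ∧ γ' = γ')]
      norm_num
  -- monotonicity of the projection
  have hgmono : @Monotone P' P (PartialOrder.toPreorder) _ (fun x' : P' => G0 x'.1) := by
    rintro ⟨u | i, hu⟩ ⟨v | j, hv⟩ h
    · exact h
    · exact h.1
    · exact h.elim
    · exact h
  -- the branched cover structure on P'
  have hBC : @IsBranchedCover P' Q PO _ FT _ (fun x' : P' => f (G0 x'.1))
      (fun x' : P' => W0 x'.1) := by
    refine ⟨?_, ?_, ?_, ?_⟩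
    · -- weights
      rintro ⟨u | i, hu⟩
      · show 1 ≤ W0 (.inl u)
        rw [hW0l]
        split_ifs with h
        · rcases h with rfl | rfl | rfl
          · omega
          · have h2' := hu (Or.inl rfl); omega
          · have h2' := hu (Or.inr rfl); omega
        · exact hw1 u
      · exact le_refl 1
    · -- lower order isomorphism
      rintro x y z hy hz
      have hyx := hgmono hy
      have hzx := hgmono hz
      constructor
      · intro hf
        have hyz : G0 y.1 ≤ G0 z.1 := (h2 (G0 x.1) (G0 y.1) (G0 z.1) hyx hzx).mp hf
        obtain ⟨x0, hx0⟩ := x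
        obtain ⟨y0, hy0⟩ := y
        obtain ⟨z0, hz0⟩ := z
        rcases y0 with u | i <;> rcases z0 with v | j
        · exact hyz
        · rcases x0 with t | k
          · exact hz.elim
          · exact ⟨hyz, (hy : auxLe τ ρ (.inl u) (.inr k)).2⟩
        · rcases x0 with t | k
          · exact hy.elim
          · exact absurd (le_trans (hτρ i) hyz) ((hz : auxLe τ ρ (.inl v) (.inr k)).2)
        · exact hyz
      · intro h
        exact (h2 (G0 x.1) (G0 y.1) (G0 z.1) hyx hzx).mpr (hgmono h)
    · -- surjectivity onto lower sets
      rintro ⟨x0, hx0⟩ η hη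
      rcases x0 with z | i
      · obtain ⟨y, hyz, hfy⟩ := h3 z η hη
        have hPy : Pr (.inl y) := by
          rintro (rfl | rfl)
          · have hz : z = y := hγel hfa hyz
            exact hz ▸ hx0 (Or.inl hz)
          · have hz : z = y := hγ'el hfb hyz
            exact hz ▸ hx0 (Or.inr hz)
        exact ⟨⟨.inl y, hPy⟩, hyz, hfy⟩
      · obtain ⟨y, hyρ, hfy⟩ := h3 (ρ i) η hη
        by_cases hτy : τ ≤ y
        · rcases hupt hτy with h1 | h1 | h1
          · refine ⟨⟨.inr 0, hPrr 0⟩, ?_, ?_⟩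
            · exact hτρ i
            · have hyτ : y = τ := hfτle hτy h1
              subst hyτ
              exact hfy
          · fin_cases i
            · exfalso
              have hle : γ ≤ f τ := by rw [← h1]; exact fmono hyρ
              exact hγτ (hγmax (f τ) hle).symm
            · have hya : y = a := finj hyρ (by rw [h1]; exact hfa.symm)
              subst hya
              exact ⟨⟨.inr 1, hPrr 1⟩, le_rfl, hfy⟩
            · exfalso
              have hle : γ ≤ γ' := by rw [← h1, ← hfb]; exact fmono hyρ
              exact hγγ' (hγmax γ' hle).symm
          · fin_cases i
            · exfalso
              have hle : γ' ≤ f τ := by rw [← h1]; exact fmono hyρ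
              exact hγ'τ (hγ'max (f τ) hle).symm
            · exfalso
              have hle : γ' ≤ γ := by rw [← h1, ← hfa]; exact fmono hyρ
              exact hγγ' (hγ'max γ hle)
            · have hyb : y = b := finj hyρ (by rw [h1]; exact hfb.symm)
              subst hyb
              exact ⟨⟨.inr 2, hPrr 2⟩, le_rfl, hfy⟩
        · refine ⟨⟨.inl y, fun hcase => ?_⟩, ⟨hyρ, hτy⟩, hfy⟩
          exfalso
          rcases hcase with rfl | rfl
          · exact hτy hτa
          · exact hτy hτb
    · -- trace condition
      rintro ⟨x0, hx0⟩ η η' hη hη'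
      rcases x0 with z | i
      · by_cases hτz : τ ≤ z
        · by_cases hzτ : z = τ
          · subst hzτ
            exact (L2 η hη).trans (L2 η' hη').symm
          · rcases hupt hτz with h1 | h1 | h1
            · exact absurd (hfτle hτz h1) hzτ
            · have he : η = γ := hγmax η (by rw [← h1]; exact hη)
              have he' : η' = γ := hγmax η' (by rw [← h1]; exact hη')
              rw [he, he']
            · have he : η = γ' := hγ'max η (by rw [← h1]; exact hη)
              have he' : η' = γ' := hγ'max η' (by rw [← h1]; exact hη')
              rw [he, he']
        · exact (L1 z hτz η).trans ((h4 z η η' hη hη').trans (L1 z hτz η').symm)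
      · fin_cases i
        · exact (L3 η hη).trans (L3 η' hη').symm
        · have he : η = γ := hγmax η (by rw [← hfa]; exact hη)
          have he' : η' = γ := hγmax η' (by rw [← hfa]; exact hη')
          rw [he, he']
        · have he : η = γ' := hγ'max η (by rw [← hfb]; exact hη)
          have he' : η' = γ' := hγ'max η' (by rw [← hfb]; exact hη')
          rw [he, he']
  -- the trace of the weights
  have htr : ∀ x : P,
      (∑ y' ∈ Finset.univ.filter (fun y' : P' => G0 y'.1 = x), W0 y'.1) = w x := by
    intro x
    have e := key (fun u => G0 u = x) W0
    refine e.trans ?_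
    rw [Finset.sum_filter, Finset.sum_filter, Fin.sum_univ_three]
    simp only [hG0l, hG0r, hW0l, hW0r, hρ0, hρ1, hρ2]
    have hthis : ∀ y : P, (if Pr (Sum.inl y) ∧ y = x
          then (if y = τ ∨ y = a ∨ y = b then w y - 1 else w y) else 0)
        = if y = x then (if Pr (Sum.inl x)
          then (if x = τ ∨ x = a ∨ x = b then w x - 1 else w x) else 0) else 0 := by
      intro y
      by_cases hyx : y = x
      · subst hyx
        by_cases hp : Pr (Sum.inl y)
        · rw [if_pos (⟨hp, rfl⟩ : Pr (Sum.inl y) ∧ y = y), if_pos rfl, if_pos hp]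
        · rw [if_neg (fun hcon : Pr (Sum.inl y) ∧ y = y => hp hcon.1), if_pos rfl, if_neg hp]
      · rw [if_neg (fun hcon : Pr (Sum.inl y) ∧ y = x => hyx hcon.2), if_neg hyx]
    rw [Finset.sum_congr rfl (fun y _ => hthis y),
      Fintype.sum_ite_eq' x (fun y => if Pr (Sum.inl x)
        then (if x = τ ∨ x = a ∨ x = b then w x - 1 else w x) else 0)]
    by_cases hxτ : x = τ
    · subst hxτ
      rw [if_pos hPrτ, if_pos (Or.inl rfl), if_pos rfl, if_neg haτ', if_neg hbτ']
      ring
    · by_cases hxa : x = a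
      · subst hxa
        rw [if_pos (Or.inr (Or.inl rfl)), if_neg hτa', if_pos rfl, if_neg hba']
        by_cases hp : Pr (Sum.inl x)
        · rw [if_pos hp]; ring
        · rw [if_neg hp]
          have h3' : ¬ 2 ≤ w x := fun hh => hp (hPra.mpr hh)
          have := hw1 x
          omega
      · by_cases hxb : x = b
        · subst hxb
          rw [if_pos (Or.inr (Or.inr rfl)), if_neg hτb', if_neg hab', if_pos rfl]
          by_cases hp : Pr (Sum.inl x)
          · rw [if_pos hp]; ring
          · rw [if_neg hp]
            have h3' : ¬ 2 ≤ w x := fun hh => hp (hPrb.mpr hh)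
            have := hw1 x
            omega
        · rw [if_pos (hPrgen x hxa hxb),
            if_neg (show ¬(x = τ ∨ x = a ∨ x = b) by
              rintro (h | h | h)
              exacts [hxτ h, hxa h, hxb h]),
            if_neg (Ne.symm hxτ), if_neg (Ne.symm hxa), if_neg (Ne.symm hxb)]
          ring
  -- apply maximality and derive a contradiction
  have H := hmax2 P' PO FT (fun x' : P' => f (G0 x'.1)) (fun x' : P' => W0 x'.1) hBC
    (fun x' : P' => G0 x'.1) hgmono rfl htr
  obtain ⟨⟨hinj, -⟩, -⟩ := H
  have hcontra : (⟨.inl τ, hPrτ⟩ : P') = ⟨.inr 0, hPrr 0⟩ := by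
    apply hinj
    show G0 (.inl τ) = G0 (.inr 0)
    rw [hG0l, hG0r, hρ0]
  have := congrArg Subtype.val hcontra
  simp only at this
  exact absurd this (by simp)
end
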